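/- Let A and B be countable finiteness spaces. Then the assignment f ↦ (x ↦ f·x) is a bijection from the set of finitary relations f : A → B onto the set of F-linear maps 𝔉(A) → 𝔉(B). -/
import Mathlib


/-- The finiteness dual of a collection of subsets of `α`. -/
def FinDual {α : Type} (X : Set (Set α)) : Set (Set α) :=
  { u | ∀ x ∈ X, (x ∩ u).Finite }

/-- A family `(x_i)` of members of `F` is summable (with sum `⋃ i, x i`) if
each point belongs to only finitely many members and the union lies in `F`. -/
def FSummable {α : Type} (F : Set (Set α)) {ι : Type} (x : ι → Set α) : Prop :=
  (∀ i, x i ∈ F) ∧ (∀ a, {i | a ∈ x i}.Finite) ∧ (⋃ i, x i) ∈ F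

/-- Forward application of a relation. -/
def RelApp {α β : Type} (t : Set (α × β)) (x : Set α) : Set β :=
  { b | ∃ a ∈ x, (a, b) ∈ t }

/-- Transpose application of a relation. -/
def RelAppT {α β : Type} (t : Set (α × β)) (v : Set β) : Set α :=
  { a | ∃ b ∈ v, (a, b) ∈ t }

/-- A finitary relation between finiteness spaces `(α, F)` and `(β, G)`. -/
def Finitary {α β : Type} (F : Set (Set α)) (G : Set (Set β))
    (f : Set (α × β)) : Prop :=
  (∀ x ∈ F, RelApp f x ∈ G) ∧ (∀ v ∈ FinDual G, RelAppT f v ∈ FinDual F)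

/-- An F-linear map `𝔉(A) → 𝔉(B)`: it preserves `∅` and sends summable
families to summable families, preserving sums. -/
def FLinMap {α β : Type} (F : Set (Set α)) (G : Set (Set β))
    (g : {x : Set α // x ∈ F} → {y : Set β // y ∈ G}) : Prop :=
  (∀ he : (∅ : Set α) ∈ F, (g ⟨∅, he⟩).1 = ∅) ∧
  ∀ (ι : Type), Countable ι → ∀ (x : ι → Set α) (hx : FSummable F x),
    FSummable G (fun i => (g ⟨x i, hx.1 i⟩).1) ∧
    (g ⟨⋃ i, x i, hx.2.2⟩).1 = ⋃ i, (g ⟨x i, hx.1 i⟩).1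

lemma singleton_mem_finDual {α : Type} (X : Set (Set α)) (a : α) :
    ({a} : Set α) ∈ FinDual X := by
  intro x _
  exact (Set.finite_singleton a).subset Set.inter_subset_right

lemma sum_singletons {α : Type} (F : Set (Set α))
    (hsing : ∀ a : α, ({a} : Set α) ∈ F) (x : Set α) (hx : x ∈ F) :
    (⋃ i : ↥x, ({i.1} : Set α)) = x ∧ FSummable F (fun i : ↥x => ({i.1} : Set α)) := by
  have hU : (⋃ i : ↥x, ({i.1} : Set α)) = x := by
    ext a
    simp [Set.mem_iUnion]
  refine ⟨hU, fun i => hsing i.1, fun a => ?_,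
    by rw [show (⋃ i : ↥x, ({i.1} : Set α)) = x from hU]; exact hx⟩
  apply Set.Subsingleton.finite
  intro i hi j hj
  simp only [Set.mem_setOf_eq, Set.mem_singleton_iff] at hi hj
  exact Subtype.ext (hi ▸ hj ▸ rfl)

/-- For countable finiteness spaces `A = (α, F)` and `B = (β, G)`, the
assignment `f ↦ (x ↦ f·x)` is a bijection from finitary relations `A → B`
onto F-linear maps `𝔉(A) → 𝔉(B)`. -/
theorem stmt2 {α β : Type} [Countable α] [Countable β]
    (F : Set (Set α)) (G : Set (Set β))
    (hF : FinDual (FinDual F) = F) (hG : FinDual (FinDual G) = G) :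
    (∀ f : Set (α × β), Finitary F G f →
      ∃ g : {x : Set α // x ∈ F} → {y : Set β // y ∈ G}, FLinMap F G g ∧
        ∀ (x : Set α) (hx : x ∈ F), (g ⟨x, hx⟩).1 = RelApp f x) ∧
    (∀ g : {x : Set α // x ∈ F} → {y : Set β // y ∈ G}, FLinMap F G g →
      ∃! f : Set (α × β), Finitary F G f ∧
        ∀ (x : Set α) (hx : x ∈ F), (g ⟨x, hx⟩).1 = RelApp f x) := by
  have hsingF : ∀ a : α, ({a} : Set α) ∈ F := fun a =>
    hF ▸ singleton_mem_finDual (FinDual F) a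
  constructor
  · -- forward direction: finitary relation gives F-linear map
    intro f hf
    refine ⟨fun x => ⟨RelApp f x.1, hf.1 x.1 x.2⟩, ⟨?_, ?_⟩, fun x hx => rfl⟩
    · intro he
      ext b
      simp [RelApp]
    · intro ι hι x hx
      have hUapp : RelApp f (⋃ i, x i) = ⋃ i, RelApp f (x i) := by
        ext b
        simp only [RelApp, Set.mem_setOf_eq, Set.mem_iUnion]
        tauto
      have hptfin : ∀ b : β, {i | b ∈ RelApp f (x i)}.Finite := by
        intro b
        have hmem : RelAppT f {b} ∈ FinDual F :=
          hf.2 {b} (singleton_mem_finDual G b)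
        have hSfin : ((⋃ i, x i) ∩ RelAppT f {b}).Finite := hmem _ hx.2.2
        have hsub : {i | b ∈ RelApp f (x i)} ⊆
            ⋃ a ∈ (⋃ i, x i) ∩ RelAppT f {b}, {i | a ∈ x i} := by
          intro i hi
          obtain ⟨a, ha, hab⟩ := hi
          refine Set.mem_biUnion ⟨Set.mem_iUnion.2 ⟨i, ha⟩, ⟨b, rfl, hab⟩⟩ ha
        exact (hSfin.biUnion (fun a _ => hx.2.1 a)).subset hsub
      refine ⟨⟨fun i => hf.1 (x i) (hx.1 i), hptfin, ?_⟩, hUapp⟩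
      rw [show (⋃ i, RelApp f (x i)) = RelApp f (⋃ i, x i) from hUapp.symm]
      exact hf.1 _ hx.2.2
  · -- backward direction: F-linear map comes from a unique finitary relation
    intro g hg
    set f : Set (α × β) := {p | p.2 ∈ (g ⟨{p.1}, hsingF p.1⟩).1} with hfdef
    -- key: g is given by RelApp f on every x ∈ F
    have key : ∀ (x : Set α) (hx : x ∈ F), (g ⟨x, hx⟩).1 = RelApp f x ∧
        FSummable G (fun i : ↥x => (g ⟨{i.1}, hsingF i.1⟩).1) := by
      intro x hx
      obtain ⟨hU, hsum⟩ := sum_singletons F hsingF x hx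
      obtain ⟨hsum', heq⟩ := hg.2 ↥x inferInstance (fun i : ↥x => ({i.1} : Set α)) hsum
      have hxeq : (⟨⋃ i : ↥x, ({i.1} : Set α), hsum.2.2⟩ : {y : Set α // y ∈ F}) =
          ⟨x, hx⟩ := Subtype.ext hU
      rw [hxeq] at heq
      refine ⟨?_, hsum'⟩
      rw [heq]
      ext b
      simp only [Set.mem_iUnion, RelApp, Set.mem_setOf_eq]
      constructor
      · rintro ⟨i, hi⟩
        exact ⟨i.1, i.2, hi⟩
      · rintro ⟨a, ha, hab⟩
        exact ⟨⟨a, ha⟩, hab⟩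
    have hfin : Finitary F G f := by
      constructor
      · intro x hx
        rw [← (key x hx).1]
        exact (g ⟨x, hx⟩).2
      · intro v hv x hx
        obtain ⟨hgx, hsum'⟩ := key x hx
        have hTfin : ((⋃ i : ↥x, (g ⟨{i.1}, hsingF i.1⟩).1) ∩ v).Finite :=
          hv _ hsum'.2.2
        have hsub : x ∩ RelAppT f v ⊆
            ⋃ b ∈ (⋃ i : ↥x, (g ⟨{i.1}, hsingF i.1⟩).1) ∩ v,
              Subtype.val '' {i : ↥x | b ∈ (g ⟨{i.1}, hsingF i.1⟩).1} := by
          rintro a ⟨hax, b, hbv, hab⟩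
          refine Set.mem_biUnion ⟨Set.mem_iUnion.2 ⟨⟨a, hax⟩, hab⟩, hbv⟩ ?_
          exact ⟨⟨a, hax⟩, hab, rfl⟩
        exact (hTfin.biUnion (fun b _ => (hsum'.2.1 b).image _)).subset hsub
    refine ⟨f, ⟨hfin, fun x hx => (key x hx).1⟩, ?_⟩
    rintro f' ⟨hf', heq'⟩
    ext ⟨a, b⟩
    have h1 : (g ⟨{a}, hsingF a⟩).1 = RelApp f' {a} := heq' {a} (hsingF a)
    have h2 : (a, b) ∈ f' ↔ b ∈ RelApp f' {a} := by
      simp [RelApp]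
    rw [h2, ← h1]
    exact Iff.rfl
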